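/- arXiv:1811.02933 — 3 statements merged into one kernel-verified Lean document; each statement's English description precedes it below -/
import Mathlib

section
/- For any probability vector (p_1,...,p_n) with p_k ≥ 0 and p_1+...+p_n = 1, the inequality ∑_{k=1}^n (1-p_k)·log(1-p_k) ≥ ∑_{k=1}^n p_k·log(p_1+...+p_k) + ∑_{k=1}^n p_k·log(p_k+...+p_n) holds, where terms of the form x·log(x) are interpreted as 0 when x = 0. -/
/-!
Let `Q k` be the sum of the entries before `k`, so the prefix sum up to `k` is `Q k + p k` and
the suffix sum from `k` is `1 - Q k`. With `y = Q k`, `q = p k`, `z = 1 - y - q`, the `k`-th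
terms compare as `q log (y + q) + q log (q + z) ≤ (y + z) log (y + z) + φ (y + q) - φ y`, where
`φ t = t log t - (1 - t) log (1 - t)` (`mulLogSub`); the corrections telescope to `φ 1 - φ 0 = 0`.
The termwise inequality is the sum of `a log a ≤ a log (a + b) + a log (a + c)` for `(a, b, c)`
equal to `(y, z, q)` and `(z, y, q)`, which holds because `(a + b) (a + c) = a + b c ≥ a`
when `a + b + c = 1`.
-/

open Real Finset

theorem mul_log_le_mul_log_add_add_mul_log_add {a b c : ℝ} (ha : 0 ≤ a) (hb : 0 ≤ b)
    (hc : 0 ≤ c) (habc : a + b + c = 1) :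
    a * log a ≤ a * log (a + b) + a * log (a + c) := by
  rcases ha.eq_or_lt with rfl | ha
  · simp
  have hprod : a ≤ (a + b) * (a + c) := by nlinarith [mul_nonneg hb hc]
  rw [← mul_add, ← log_mul (by positivity) (by positivity)]
  exact mul_le_mul_of_nonneg_left (log_le_log ha hprod) ha.le

noncomputable def mulLogSub (t : ℝ) : ℝ := t * log t - (1 - t) * log (1 - t)

@[simp] theorem mulLogSub_zero : mulLogSub 0 = 0 := by simp [mulLogSub]

@[simp] theorem mulLogSub_one : mulLogSub 1 = 0 := by simp [mulLogSub]

theorem mul_log_add_mul_log_one_sub_le {y q : ℝ} (hy : 0 ≤ y) (hq : 0 ≤ q)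
    (hyq : y + q ≤ 1) :
    q * log (y + q) + q * log (1 - y) ≤
      (1 - q) * log (1 - q) + (mulLogSub (y + q) - mulLogSub y) := by
  have hz : 0 ≤ 1 - y - q := by linarith
  have hy' := mul_log_le_mul_log_add_add_mul_log_add hy hz hq (by ring)
  have hz' := mul_log_le_mul_log_add_add_mul_log_add hz hy hq (by ring)
  rw [show y + (1 - y - q) = 1 - q by ring] at hy'
  rw [show 1 - y - q + y = 1 - q by ring, show 1 - y - q + q = 1 - y by ring] at hz'
  simp only [mulLogSub, show 1 - (y + q) = 1 - y - q by ring]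
  linarith

section PrefixSum

variable {n : ℕ} (p : Fin n → ℝ)

def prefixSum (m : ℕ) : ℝ := ∑ j ∈ univ.filter (fun j : Fin n => (j : ℕ) < m), p j

@[simp] theorem prefixSum_zero : prefixSum p 0 = 0 := by simp [prefixSum]

theorem prefixSum_self : prefixSum p n = ∑ j, p j := by
  simp [prefixSum]

theorem prefixSum_succ (k : Fin n) : prefixSum p (k + 1) = prefixSum p k + p k := by
  have : univ.filter (fun j : Fin n => (j : ℕ) < k + 1) =
      insert k (univ.filter fun j : Fin n => (j : ℕ) < k) := by
    ext j; simp only [mem_filter, mem_univ, true_and, mem_insert, Fin.ext_iff]; omega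
  rw [prefixSum, this, sum_insert (by simp), add_comm, prefixSum]

theorem sum_filter_le_eq_prefixSum (k : Fin n) :
    ∑ j with j ≤ k, p j = prefixSum p (k + 1) := by
  simp only [prefixSum, Nat.lt_succ_iff, Fin.le_def]

theorem sum_filter_ge_eq_sub_prefixSum (k : Fin n) :
    ∑ j with k ≤ j, p j = ∑ j, p j - prefixSum p k := by
  rw [eq_sub_iff_add_eq, prefixSum, add_comm, ← sum_filter_add_sum_filter_not univ (· < k)]
  simp only [Fin.lt_def, not_lt, Fin.le_def]

variable {p}

theorem prefixSum_nonneg (hp : ∀ k, 0 ≤ p k) (m : ℕ) : 0 ≤ prefixSum p m :=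
  sum_nonneg fun j _ => hp j

theorem prefixSum_le_sum (hp : ∀ k, 0 ≤ p k) (m : ℕ) : prefixSum p m ≤ ∑ j, p j :=
  sum_le_sum_of_subset_of_nonneg (filter_subset _ _) fun j _ _ => hp j

end PrefixSum

theorem sum_fin_sub_eq_sub (n : ℕ) (f : ℕ → ℝ) :
    ∑ k : Fin n, (f (k + 1) - f k) = f n - f 0 :=
  (Fin.sum_univ_eq_sum_range (fun k => f (k + 1) - f k) n).trans (sum_range_sub f n)

theorem stmt_0 (n : ℕ) (p : Fin n → ℝ) (hp : ∀ k, 0 ≤ p k)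
    (hsum : ∑ k, p k = 1) :
    ∑ k, (1 - p k) * Real.log (1 - p k) ≥
      (∑ k, p k * Real.log (∑ j ∈ Finset.univ.filter (· ≤ k), p j)) +
      (∑ k, p k * Real.log (∑ j ∈ Finset.univ.filter (k ≤ ·), p j)) := by
  have htel :
      ∑ k : Fin n, (mulLogSub (prefixSum p (k + 1)) - mulLogSub (prefixSum p k)) = 0 := by
    rw [sum_fin_sub_eq_sub n fun m => mulLogSub (prefixSum p m)]
    simp [prefixSum_self, hsum]
  calc (∑ k, p k * log (∑ j with j ≤ k, p j)) + ∑ k, p k * log (∑ j with k ≤ j, p j)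
      = ∑ k, (p k * log (prefixSum p k + p k) + p k * log (1 - prefixSum p k)) := by
        simp only [sum_filter_le_eq_prefixSum, sum_filter_ge_eq_sub_prefixSum, prefixSum_succ,
          hsum, sum_add_distrib]
    _ ≤ ∑ k, ((1 - p k) * log (1 - p k) +
          (mulLogSub (prefixSum p (k + 1)) - mulLogSub (prefixSum p k))) := by
        refine sum_le_sum fun k _ => ?_
        rw [prefixSum_succ]
        refine mul_log_add_mul_log_one_sub_le (prefixSum_nonneg hp k) (hp k) ?_
        simpa only [← prefixSum_succ, ← hsum] using prefixSum_le_sum hp (k + 1)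
    _ = ∑ k, (1 - p k) * log (1 - p k) := by rw [sum_add_distrib, htel, add_zero]
end

section
/- Let γ = (√17 - 3)/2. Suppose (q,r,s,t) ∈ Δ_4 with r + s ≤ γ. Then φ(q,r,s,t) ≤ φ(q, r+s, t), where φ(p) = ∑_k p_k·log(prefix sum up to k) + ∑_k p_k·log(suffix sum from k) - 2∑_k (1-p_k)·log(1-p_k). -/
open Finset

noncomputable def phi {n : ℕ} (p : Fin n → ℝ) : ℝ :=
  (∑ k, p k * Real.log (∑ j ∈ Finset.univ.filter (· ≤ k), p j)) +
  (∑ k, p k * Real.log (∑ j ∈ Finset.univ.filter (k ≤ ·), p j)) -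
  2 * ∑ k, (1 - p k) * Real.log (1 - p k)

/-!
Merging `r` and `s` into one atom changes `φ` by
`r log ((q+r+s)/(q+r)) + s log ((r+s+t)/(s+t)) + 2 [(1-r) log (1-r) + (1-s) log (1-s) - (1-u) log (1-u)]`
with `u = r + s`. Since `log (a/b) ≥ 2(a-b)/(a+b)` and `q + r + s + t = 1`, the harmonic-mean
inequality bounds the first two terms below by `8rs/(2+u)`. For `r ≤ s`, replacing the three
logarithms of the bracket by rational bounds of Padé type at `1` reduces the claim to the nonnegativity of a
polynomial `N(r, u)` on `0 ≤ 2r ≤ u`, `u² + 3u ≤ 2`, i.e. `u ≤ γ`. The case `s ≤ r` follows since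
`φ` is invariant under reversing the vector.
-/

open Real

theorem le_of_hasDerivAt_le {f g f' g' : ℝ → ℝ} {a x : ℝ}
    (hf : ∀ y, a ≤ y → HasDerivAt f (f' y) y) (hg : ∀ y, a ≤ y → HasDerivAt g (g' y) y)
    (hfg' : ∀ y, a ≤ y → f' y ≤ g' y) (ha : f a ≤ g a) (hx : a ≤ x) : f x ≤ g x :=
  image_le_of_deriv_right_le_deriv_boundary
    (fun y hy => (hf y hy.1).continuousAt.continuousWithinAt)
    (fun y hy => (hf y hy.1).hasDerivWithinAt) ha
    (fun y hy => (hg y hy.1).continuousAt.continuousWithinAt)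
    (fun y hy => (hg y hy.1).hasDerivWithinAt) (fun y hy => hfg' y hy.1) ⟨hx, le_rfl⟩

theorem pade22_le_log {x : ℝ} (hx : 1 ≤ x) :
    3 * (x ^ 2 - 1) / (x ^ 2 + 4 * x + 1) ≤ log x := by
  refine le_of_hasDerivAt_le (f := fun y => 3 * (y ^ 2 - 1) / (y ^ 2 + 4 * y + 1)) (g := log)
    (f' := fun y => 12 * (y ^ 2 + y + 1) / (y ^ 2 + 4 * y + 1) ^ 2) (g' := fun y => y⁻¹)
    (fun y hy => ?_) (fun y hy => hasDerivAt_log (by positivity)) (fun y hy => ?_) (by norm_num) hx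
  · refine ((((hasDerivAt_pow 2 y).sub_const 1).const_mul 3).fun_div
      (((hasDerivAt_pow 2 y).fun_add ((hasDerivAt_id' (x := y)).const_mul 4)).add_const 1)
      (by positivity)).congr_deriv ?_
    field_simp
    ring
  · have hy0 : 0 < y := by linarith
    -- `(y² + 4y + 1)² - 12y (y² + y + 1) = (y - 1)⁴`
    rw [div_le_iff₀ (by positivity), inv_mul_eq_div, le_div_iff₀ hy0]
    nlinarith [pow_nonneg (sq_nonneg (y - 1)) 2]

theorem log_le_pade21 {x : ℝ} (hx : 1 ≤ x) : log x ≤ (x ^ 2 + 4 * x - 5) / (4 * x + 2) := by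
  refine le_of_hasDerivAt_le (f := log) (g := fun y => (y ^ 2 + 4 * y - 5) / (4 * y + 2))
    (f' := fun y => y⁻¹) (g' := fun y => (y ^ 2 + y + 7) / (2 * y + 1) ^ 2)
    (fun y hy => hasDerivAt_log (by positivity)) (fun y hy => ?_) (fun y hy => ?_) (by norm_num) hx
  · refine ((((hasDerivAt_pow 2 y).fun_add ((hasDerivAt_id' (x := y)).const_mul 4)).sub_const 5).fun_div
      (((hasDerivAt_id' (x := y)).const_mul 4).add_const 2) (by positivity)).congr_deriv ?_
    field_simp
    ring
  · have hy0 : 0 < y := by linarith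
    -- `y (y² + y + 7) - (2y + 1)² = (y - 1)³`
    rw [le_div_iff₀ (by positivity), inv_mul_eq_div, div_le_iff₀ hy0]
    nlinarith [pow_nonneg (sub_nonneg.2 hy) 3]

theorem log_le_half_sub_inv {x : ℝ} (hx : 1 ≤ x) : log x ≤ (x - x⁻¹) / 2 := by
  rw [← sinh_log (by positivity)]
  exact self_le_sinh_iff.2 (log_nonneg hx)

theorem pade22_le_log_sub_log {a b : ℝ} (hb : 0 < b) (hab : b ≤ a) :
    3 * (a ^ 2 - b ^ 2) / (a ^ 2 + 4 * a * b + b ^ 2) ≤ log a - log b := by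
  have h := pade22_le_log ((one_le_div hb).2 hab)
  rw [log_div (by linarith) hb.ne'] at h
  convert h using 1
  field_simp

theorem two_mul_sub_div_add_le_log_sub_log {a b : ℝ} (hb : 0 < b) (hab : b ≤ a) :
    2 * (a - b) / (a + b) ≤ log a - log b := by
  have ha : 0 < a := hb.trans_le hab
  refine le_trans ?_ (pade22_le_log_sub_log hb hab)
  rw [div_le_div_iff₀ (by positivity) (by positivity)]
  nlinarith [pow_nonneg (sub_nonneg.2 hab) 3]

theorem neg_log_le_pade21 {v : ℝ} (hv0 : 0 < v) (hv1 : v ≤ 1) :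
    -log v ≤ (1 - v) * (1 + 5 * v) / (2 * v * (2 + v)) := by
  have h := log_le_pade21 ((one_le_inv₀ hv0).2 hv1)
  rw [log_inv] at h
  convert h using 1
  field_simp
  ring

theorem neg_log_le_half_inv_sub {v : ℝ} (hv0 : 0 < v) (hv1 : v ≤ 1) :
    -log v ≤ (v⁻¹ - v) / 2 := by
  simpa [log_inv] using log_le_half_sub_inv ((one_le_inv₀ hv0).2 hv1)

theorem phi_four (a b c d : ℝ) : phi ![a, b, c, d] =
    a * log a + b * log (a + b) + c * log (a + b + c) + d * log (a + b + c + d)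
    + (a * log (a + b + c + d) + b * log (b + c + d) + c * log (c + d) + d * log d)
    - 2 * ((1 - a) * log (1 - a) + (1 - b) * log (1 - b) + (1 - c) * log (1 - c)
      + (1 - d) * log (1 - d)) := by
  simp [phi, Fin.sum_univ_four, Finset.sum_filter]

theorem phi_three (a b c : ℝ) : phi ![a, b, c] =
    a * log a + b * log (a + b) + c * log (a + b + c)
    + (a * log (a + b + c) + b * log (b + c) + c * log c)
    - 2 * ((1 - a) * log (1 - a) + (1 - b) * log (1 - b) + (1 - c) * log (1 - c)) := by
  simp [phi, Fin.sum_univ_three, Finset.sum_filter]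

theorem phi_four_rev (a b c d : ℝ) : phi ![a, b, c, d] = phi ![d, c, b, a] := by
  rw [phi_four, phi_four]
  ring_nf

theorem phi_three_rev (a b c : ℝ) : phi ![a, b, c] = phi ![c, b, a] := by
  rw [phi_three, phi_three]
  ring_nf

theorem phi_merge_sub (q r s t : ℝ) : phi ![q, r + s, t] - phi ![q, r, s, t] =
    r * (log (q + r + s) - log (q + r)) + s * (log (r + s + t) - log (s + t))
    + 2 * ((1 - r) * log (1 - r) + (1 - s) * log (1 - s) - (1 - (r + s)) * log (1 - (r + s))) := by
  rw [phi_four, phi_three]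
  ring_nf

theorem two_mul_mul_div_le_mul_log_sub_log {b x y : ℝ} (hx : 0 ≤ x) (hxb : x ≤ b) (hy : 0 ≤ y) :
    2 * x * y / (2 * b + y) ≤ x * (log (b + y) - log b) := by
  rcases hx.eq_or_lt with rfl | hx
  · simp
  have hlog := two_mul_sub_div_add_le_log_sub_log (a := b + y) (hx.trans_le hxb) (by linarith)
  calc 2 * x * y / (2 * b + y) = x * (2 * (b + y - b) / (b + y + b)) := by ring
    _ ≤ x * (log (b + y) - log b) := mul_le_mul_of_nonneg_left hlog hx.le

theorem eight_mul_div_le_merge_gain {q r s t : ℝ} (hq : 0 ≤ q) (hr : 0 ≤ r) (hs : 0 ≤ s)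
    (ht : 0 ≤ t) (hsum : q + r + s + t = 1) :
    8 * r * s / (2 + (r + s)) ≤
      r * (log (q + r + s) - log (q + r)) + s * (log (r + s + t) - log (s + t)) := by
  have hqr := two_mul_mul_div_le_mul_log_sub_log (b := q + r) hr (by linarith) hs
  have hst := two_mul_mul_div_le_mul_log_sub_log (b := s + t) hs (by linarith) hr
  rw [show s + t + r = r + s + t by ring] at hst
  -- `4 / (A + B) ≤ 1 / A + 1 / B`, where `A + B = 2 + (r + s)` because `q + r + s + t = 1`
  have hHM : 8 * r * s / (2 + (r + s)) ≤
      2 * r * s / (2 * (q + r) + s) + 2 * s * r / (2 * (s + t) + r) := by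
    rcases hr.eq_or_lt with rfl | hr
    · simp
    have hsum' : 2 + (r + s) = (2 * (q + r) + s) + (2 * (s + t) + r) := by linarith
    rw [hsum', div_add_div _ _ (by positivity) (by positivity),
      div_le_div_iff₀ (by positivity) (by positivity)]
    nlinarith [mul_nonneg (mul_nonneg hr.le hs) (sq_nonneg (2 * (q + r) + s - (2 * (s + t) + r)))]
  linarith

/-- The numerator of the rational function in `pade_merge_bound_nonneg`, divided by `r` and
written in `u = r + s`. -/
def mergeNumerator (r u : ℝ) : ℝ :=
  6 * u * (1 - u) ^ 2 * (13 * u ^ 2 - 28 * u + 12)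
    - 6 * (12 - 64 * u + 119 * u ^ 2 - 92 * u ^ 3 + 26 * u ^ 4 - u ^ 5) * r
    - (84 - 262 * u + 258 * u ^ 2 - 83 * u ^ 3 + 6 * u ^ 4) * r ^ 2
    - (18 - 27 * u + 10 * u ^ 2 - u ^ 3) * r ^ 3

theorem mergeNumerator_nonneg {r u : ℝ} (hr : 0 ≤ r) (hru : 2 * r ≤ u) (hu : u ^ 2 + 3 * u ≤ 2) :
    0 ≤ mergeNumerator r u := by
  have hu0 : 0 ≤ u := by linarith
  have hC0 : 0 ≤ 13 * u ^ 2 - 28 * u + 12 := by nlinarith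
  have hE : 0 ≤ 288 - 1128 * u + 1538 * u ^ 2 - 873 * u ^ 3 + 156 * u ^ 4 + 13 * u ^ 5 := by
    nlinarith [sq_nonneg (u - 1 / 2), mul_nonneg hu0 hu0, mul_nonneg (mul_nonneg hu0 hu0) hu0,
      sq_nonneg (u ^ 2 - 3 * u)]
  have hC2 : 0 ≤ 84 - 262 * u + 258 * u ^ 2 - 83 * u ^ 3 + 6 * u ^ 4 := by
    nlinarith [sq_nonneg (u - 1 / 2), mul_nonneg hu0 hu0, mul_nonneg (mul_nonneg hu0 hu0) hu0]
  have hC3 : 0 ≤ 18 - 27 * u + 10 * u ^ 2 - u ^ 3 := by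
    nlinarith [mul_nonneg hu0 hu0, mul_nonneg (mul_nonneg hu0 hu0) hu0]
  have hw : 0 ≤ u - 2 * r := by linarith
  -- `mergeNumerator` is concave in `r ≥ 0`; this identity interpolates it between `r = 0` and
  -- `r = u / 2`, plus the concavity defect.
  have key : 4 * mergeNumerator r u =
      24 * (u - 2 * r) * (1 - u) ^ 2 * (13 * u ^ 2 - 28 * u + 12)
      + r * (288 - 1128 * u + 1538 * u ^ 2 - 873 * u ^ 3 + 156 * u ^ 4 + 13 * u ^ 5)
      + 2 * r * (u - 2 * r) * (84 - 262 * u + 258 * u ^ 2 - 83 * u ^ 3 + 6 * u ^ 4)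
      + r * (u - 2 * r) * (u + 2 * r) * (18 - 27 * u + 10 * u ^ 2 - u ^ 3) := by
    unfold mergeNumerator
    ring
  linarith [mul_nonneg (mul_nonneg hw (sq_nonneg (1 - u))) hC0, mul_nonneg hr hE,
    mul_nonneg (mul_nonneg hr hw) hC2,
    mul_nonneg (mul_nonneg (mul_nonneg hr hw) (by linarith : 0 ≤ u + 2 * r)) hC3]

theorem pade_merge_bound_nonneg {r s : ℝ} (hr : 0 ≤ r) (hrs : r ≤ s)
    (hu : (r + s) ^ 2 + 3 * (r + s) ≤ 2) :
    0 ≤ 8 * r * s / (2 + (r + s)) + 2 * ((1 - s) * (3 * ((1 - s) ^ 2 - (1 - (r + s)) ^ 2)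
      / ((1 - s) ^ 2 + 4 * (1 - s) * (1 - (r + s)) + (1 - (r + s)) ^ 2))
      - r * ((1 - (1 - (r + s))) * (1 + 5 * (1 - (r + s))) / (2 * (1 - (r + s)) * (2 + (1 - (r + s)))))
      - (1 - r) * (((1 - r)⁻¹ - (1 - r)) / 2)) := by
  have h1 : 0 < 1 - (r + s) := by nlinarith
  have h2 : 0 < 2 + (r + s) := by linarith
  have h3 : 0 < 3 - (r + s) := by linarith
  have hQ : 0 < (1 - s) ^ 2 + 4 * (1 - s) * (1 - (r + s)) + (1 - (r + s)) ^ 2 := by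
    have : 0 < 1 - s := by linarith
    positivity
  have h4 : 0 < 1 - r := by linarith
  have hN := mul_nonneg hr (mergeNumerator_nonneg hr (by linarith) hu)
  refine (div_nonneg hN (mul_pos (mul_pos (mul_pos h2 hQ) h1) h3).le).trans_eq ?_
  set Q := (1 - s) ^ 2 + 4 * (1 - s) * (1 - (r + s)) + (1 - (r + s)) ^ 2 with hQ_def
  unfold mergeNumerator
  field_simp
  rw [hQ_def]
  ring

theorem neg_le_entropy_merge_gap {r s : ℝ} (hr : 0 ≤ r) (hrs : r ≤ s)
    (hu : (r + s) ^ 2 + 3 * (r + s) ≤ 2) :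
    -(8 * r * s / (2 + (r + s))) ≤
      2 * ((1 - r) * log (1 - r) + (1 - s) * log (1 - s) - (1 - (r + s)) * log (1 - (r + s))) := by
  have h1 : 0 < 1 - (r + s) := by nlinarith
  have hT1 := mul_le_mul_of_nonneg_left (pade22_le_log_sub_log (a := 1 - s) h1 (by linarith))
    (by linarith : 0 ≤ 1 - s)
  have hT2 := mul_le_mul_of_nonneg_left (neg_log_le_pade21 h1 (by linarith)) hr
  have hT3 := mul_le_mul_of_nonneg_left
    (neg_log_le_half_inv_sub (by linarith : 0 < 1 - r) (by linarith)) (by linarith : 0 ≤ 1 - r)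
  linarith [pade_merge_bound_nonneg hr hrs hu]

theorem phi_le_phi_merge_of_le {q r s t : ℝ} (hq : 0 ≤ q) (hr : 0 ≤ r) (hs : 0 ≤ s) (ht : 0 ≤ t)
    (hsum : q + r + s + t = 1) (hrs : r ≤ s) (hu : (r + s) ^ 2 + 3 * (r + s) ≤ 2) :
    phi ![q, r, s, t] ≤ phi ![q, r + s, t] := by
  rw [← sub_nonneg, phi_merge_sub]
  linarith [eight_mul_div_le_merge_gain hq hr hs ht hsum, neg_le_entropy_merge_gap hr hrs hu]

theorem sq_add_three_mul_le_two {u : ℝ} (hu0 : 0 ≤ u) (hu : u ≤ (√17 - 3) / 2) :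
    u ^ 2 + 3 * u ≤ 2 := by
  nlinarith [sq_sqrt (show (0 : ℝ) ≤ 17 by norm_num)]

theorem stmt_6 (q r s t : ℝ) (hq : 0 ≤ q) (hr : 0 ≤ r) (hs : 0 ≤ s) (ht : 0 ≤ t)
    (hsum : q + r + s + t = 1) (hrs : r + s ≤ (Real.sqrt 17 - 3) / 2) :
    phi ![q, r, s, t] ≤ phi ![q, r + s, t] := by
  have hu := sq_add_three_mul_le_two (by linarith) hrs
  rcases le_total r s with hle | hle
  · exact phi_le_phi_merge_of_le hq hr hs ht hsum hle hu
  · rw [phi_four_rev, phi_three_rev, add_comm r s]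
    rw [add_comm r s] at hu
    exact phi_le_phi_merge_of_le ht hs hr hq (by linarith) hle hu
end

section
/- Sampling-procedure probability formula: let P ∈ ℝ_{≥0}^{n×n} and π, σ ∈ S_n, and define ν_π(σ) = ∏_{i=1}^n P_{π(i), σ(π(i))} / (∑_{j=i}^n P_{π(i), σ(π(j))}) (assuming all denominators are positive). Then ∑_{σ ∈ S_n} ν_π(σ) = 1 when P has all positive entries. -/
/-! Choosing the image `p` of the first row with probability `Q 0 p / ∑ c, Q 0 c` and then running
the procedure on the remaining rows and columns factors `ν` along `Perm (Fin (n + 1)) ≃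
Fin (n + 1) × Perm (Fin n)`, so the total mass is `1` by induction on `n`. -/

open Finset Equiv

variable {𝕜 : Type*} [Field 𝕜]

/-- The paper's `ν_π(σ)` for `π = id`: the denominator is the mass of the columns still free when
row `i` is processed. -/
def sequentialSamplingProb {n : ℕ} (Q : Fin n → Fin n → 𝕜) (σ : Perm (Fin n)) : 𝕜 :=
  ∏ i, Q i (σ i) / ∑ j ∈ Ici i, Q i (σ j)

theorem sequentialSamplingProb_decomposeFin_symm {n : ℕ} (Q : Fin (n + 1) → Fin (n + 1) → 𝕜)
    (p : Fin (n + 1)) (e : Perm (Fin n)) :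
    sequentialSamplingProb Q (Perm.decomposeFin.symm (p, e)) =
      Q 0 p / (∑ c, Q 0 c) *
        sequentialSamplingProb (fun i c => Q i.succ (swap 0 p c.succ)) e := by
  rw [sequentialSamplingProb, Fin.prod_univ_succ, Perm.decomposeFin_symm_apply_zero]
  congr 1
  · rw [← bot_eq_zero, Ici_bot, Equiv.sum_comp]
  · refine prod_congr rfl fun i _ => ?_
    rw [← Fin.map_succEmb_Ici, sum_map]
    simp only [Fin.coe_succEmb, Perm.decomposeFin_symm_apply_succ]

theorem sum_sequentialSamplingProb [LinearOrder 𝕜] [IsStrictOrderedRing 𝕜] {n : ℕ}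
    (Q : Fin n → Fin n → 𝕜) (hQ : ∀ i j, 0 < Q i j) :
    ∑ σ, sequentialSamplingProb Q σ = 1 := by
  induction n with
  | zero => simp [sequentialSamplingProb]
  | succ n ih =>
    have hrow : (∑ c, Q 0 c) ≠ 0 := (sum_pos (fun c _ => hQ 0 c) univ_nonempty).ne'
    rw [← Equiv.sum_comp Perm.decomposeFin.symm, Fintype.sum_prod_type]
    simp only [sequentialSamplingProb_decomposeFin_symm, ← mul_sum]
    simp only [ih _ fun _ _ => hQ _ _, mul_one, ← sum_div, div_self hrow]

theorem stmt_19 (n : ℕ) (P : Matrix (Fin n) (Fin n) ℝ)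
    (hpos : ∀ i j, 0 < P i j) (π : Equiv.Perm (Fin n)) :
    ∑ σ : Equiv.Perm (Fin n),
      ∏ i : Fin n,
        P (π i) (σ (π i)) / (∑ j ∈ Finset.univ.filter (i ≤ ·), P (π i) (σ (π j))) = 1 := by
  have h := sum_sequentialSamplingProb (fun i c => P (π i) c) fun _ _ => hpos _ _
  rw [← Equiv.sum_comp (Equiv.mulRight π)] at h
  simpa [sequentialSamplingProb, filter_le_eq_Ici] using h
end
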